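/- arXiv:1404.0629 — 5 statements merged into one kernel-verified Lean document; each statement's English description precedes it below -/
import Mathlib

section
/- Let K, H, H̃ be groups, γ : K → H and τ : H → H̃ homomorphisms, and let τ̃ = τ ∘ γ. Assume that the commutator subgroup [H,H] is contained in the image of γ and that the center Z(H) is contained in the image of γ. If τ̃ is injective, then τ is injective. -/
/-!
Every element of `ker τ` commutes with all of `H`: its commutators lie in `ker τ ∩ [H, H]`, which is
trivial because `ker τ` meets the image of `γ` trivially. So `ker τ ≤ Z(H)`, which also lies in the
image of `γ`, forcing `ker τ = 1`.
-/

theorem MonoidHom.ker_inf_range_eq_bot_of_injective_comp {K H H' : Type*} [Group K] [Group H]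
    [Group H'] {γ : K →* H} {τ : H →* H'} (h : Function.Injective (τ.comp γ)) :
    τ.ker ⊓ γ.range = ⊥ := by
  rw [eq_bot_iff]
  rintro _ ⟨hx, k, rfl⟩
  have hk : k = 1 := (injective_iff_map_eq_one _).mp h k hx
  simp [hk]

theorem Subgroup.le_center_of_inf_commutator_eq_bot {G : Type*} [Group G] {N : Subgroup G}
    [N.Normal] (h : N ⊓ _root_.commutator G = ⊥) : N ≤ center G := by
  have hcomm : ⁅N, ⊤⁆ = ⊥ :=
    eq_bot_iff.mpr <| h ▸ le_inf (commutator_le_left N ⊤) (commutator_mono le_top le_rfl)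
  simpa [centralizer_univ] using commutator_eq_bot_iff_le_centralizer.mp hcomm

theorem stmt_0 {K H H' : Type*} [Group K] [Group H] [Group H']
    (γ : K →* H) (τ : H →* H') (τ' : K →* H') (hτ' : τ' = τ.comp γ)
    (hcomm : commutator H ≤ γ.range) (hcent : Subgroup.center H ≤ γ.range)
    (hinj : Function.Injective τ') : Function.Injective τ := by
  subst hτ'
  have hdisj := MonoidHom.ker_inf_range_eq_bot_of_injective_comp hinj
  have hcentral : τ.ker ≤ Subgroup.center H :=
    Subgroup.le_center_of_inf_commutator_eq_bot <| eq_bot_iff.mpr <|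
      hdisj ▸ inf_le_inf_left _ hcomm
  rw [← MonoidHom.ker_eq_bot_iff, ← hdisj, eq_comm, inf_eq_left]
  exact hcentral.trans hcent
end

section
/- Let K, H, H̃ be groups, γ : K → H an injective homomorphism, τ : H → H̃ a homomorphism, and τ̃ = τ ∘ γ. Assume [H,H] ⊆ im γ and Z(H) ⊆ im γ. Then τ̃ is injective if and only if τ is injective. -/
/-! If `τ ∘ γ` is injective, the kernel of `τ` is a normal subgroup meeting `im γ ⊇ [H, H]`
trivially, so its commutators with all of `H` vanish and it is central. Being central, it lies in
`im γ`, and therefore is trivial. -/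

namespace Subgroup

variable {G : Type*} [Group G]

theorem Normal.le_center_of_disjoint_commutator {N : Subgroup G} [N.Normal]
    (h : Disjoint N (_root_.commutator G)) : N ≤ center G := by
  rw [← commutator_top_right_eq_bot_iff_le_center, eq_bot_iff]
  calc ⁅N, ⊤⁆ ≤ N ⊓ _root_.commutator G :=
        le_inf (commutator_le_left N ⊤) (commutator_mono le_top le_rfl)
    _ = ⊥ := h.eq_bot

theorem Normal.eq_bot_of_disjoint {N R : Subgroup G} [N.Normal] (hcomm : _root_.commutator G ≤ R)
    (hcent : center G ≤ R) (h : Disjoint N R) : N = ⊥ :=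
  h.eq_bot_of_le ((Normal.le_center_of_disjoint_commutator (h.mono_right hcomm)).trans hcent)

end Subgroup

theorem MonoidHom.disjoint_ker_range_of_injective_comp {K H H' : Type*} [Group K] [Group H]
    [Group H'] {γ : K →* H} {τ : H →* H'} (h : Function.Injective (τ.comp γ)) :
    Disjoint τ.ker γ.range := by
  rw [Subgroup.disjoint_def]
  rintro _ hker ⟨k, rfl⟩
  rw [← map_one γ, h (by simpa using hker : τ.comp γ k = τ.comp γ 1)]

theorem stmt_1 {K H H' : Type*} [Group K] [Group H] [Group H']
    (γ : K →* H) (hγ : Function.Injective γ)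
    (τ : H →* H') (τ' : K →* H') (hτ' : τ' = τ.comp γ)
    (hcomm : commutator H ≤ γ.range) (hcent : Subgroup.center H ≤ γ.range) :
    Function.Injective τ' ↔ Function.Injective τ := by
  subst hτ'
  refine ⟨fun h => ?_, fun h => h.comp hγ⟩
  rw [← MonoidHom.ker_eq_bot_iff]
  exact Subgroup.Normal.eq_bot_of_disjoint hcomm hcent
    (MonoidHom.disjoint_ker_range_of_injective_comp h)
end

section
/- Let G be the group with presentation: generators σ, ζ, a₁, b₁, …, a_g, b_g (g ≥ 1); relations: all pairs of generators commute except the pairs {a_i, b_i}, and [a_i, b_i] = σ² for each i. Then the center of G is the subgroup generated by σ and ζ, and this subgroup is free abelian of rank 2. -/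
open scoped commutatorElement

/-- Generators: `σ`, `ζ`, and `aᵢ`, `bᵢ` for `i = 1, …, g`. -/
inductive Gen8 (g : ℕ)
  | sigma : Gen8 g
  | zeta : Gen8 g
  | a : Fin g → Gen8 g
  | b : Fin g → Gen8 g

/-- `x` and `y` form an exceptional pair `{aᵢ, bᵢ}`. -/
def Gen8.exceptional {g : ℕ} (x y : Gen8 g) : Prop :=
  ∃ i : Fin g, (x = .a i ∧ y = .b i) ∨ (x = .b i ∧ y = .a i)

/-- The defining relators: all pairs of distinct generators commute except the
pairs `{aᵢ, bᵢ}`, and `[aᵢ, bᵢ] = σ²`. -/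
def rels8 (g : ℕ) : Set (FreeGroup (Gen8 g)) :=
  { r | ∃ x y : Gen8 g, x ≠ y ∧ ¬ Gen8.exceptional x y ∧
      r = ⁅FreeGroup.of x, FreeGroup.of y⁆ } ∪
  { r | ∃ i : Fin g,
      r = ⁅FreeGroup.of (Gen8.a i), FreeGroup.of (Gen8.b i)⁆ *
            (FreeGroup.of (Gen8.sigma (g := g)) ^ 2)⁻¹ }

/-!
`G` maps to a Heisenberg-type group on `ℤ² × ℤ^g × ℤ^g` sending `σ`, `ζ` to the central
coordinates and `aᵢ`, `bᵢ` to unit vectors. Hence `σ` and `ζ` are independent, and the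
`(a, b)`-coordinates of a central element of `G` vanish. Modulo `⟨σ, ζ⟩` all generators commute
(as `⁅aᵢ, bᵢ⁆ = σ²`), so `ℤ^{2g}` maps to `G ⧸ ⟨σ, ζ⟩` inverting the `(a, b)`-coordinates; their
kernel is therefore `⟨σ, ζ⟩`, which thus contains the center.
-/

@[ext] structure Heisenberg (g : ℕ) where
  s : ℤ
  z : ℤ
  p : Fin g → ℤ
  q : Fin g → ℤ

namespace Heisenberg

variable {g : ℕ}

-- `s` is twice the usual central coordinate, so that `⁅aᵢ, bᵢ⁆` is the square of `(1, 0, 0, 0)`.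
instance : Mul (Heisenberg g) :=
  ⟨fun x y => ⟨x.s + y.s - 2 * ∑ i, x.q i * y.p i, x.z + y.z, x.p + y.p, x.q + y.q⟩⟩

instance : One (Heisenberg g) := ⟨⟨0, 0, 0, 0⟩⟩

instance : Inv (Heisenberg g) := ⟨fun x => ⟨-x.s - 2 * ∑ i, x.q i * x.p i, -x.z, -x.p, -x.q⟩⟩

@[simp] lemma mul_s (x y : Heisenberg g) : (x * y).s = x.s + y.s - 2 * ∑ i, x.q i * y.p i := rfl
@[simp] lemma mul_z (x y : Heisenberg g) : (x * y).z = x.z + y.z := rfl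
@[simp] lemma mul_p (x y : Heisenberg g) : (x * y).p = x.p + y.p := rfl
@[simp] lemma mul_q (x y : Heisenberg g) : (x * y).q = x.q + y.q := rfl
@[simp] lemma one_s : (1 : Heisenberg g).s = 0 := rfl
@[simp] lemma one_z : (1 : Heisenberg g).z = 0 := rfl
@[simp] lemma one_p : (1 : Heisenberg g).p = 0 := rfl
@[simp] lemma one_q : (1 : Heisenberg g).q = 0 := rfl
@[simp] lemma inv_s (x : Heisenberg g) : x⁻¹.s = -x.s - 2 * ∑ i, x.q i * x.p i := rfl
@[simp] lemma inv_z (x : Heisenberg g) : x⁻¹.z = -x.z := rfl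
@[simp] lemma inv_p (x : Heisenberg g) : x⁻¹.p = -x.p := rfl
@[simp] lemma inv_q (x : Heisenberg g) : x⁻¹.q = -x.q := rfl

instance : Group (Heisenberg g) where
  mul_assoc x y z := by
    ext <;> simp [add_mul, mul_add, Finset.sum_add_distrib] <;> ring
  one_mul x := by ext <;> simp
  mul_one x := by ext <;> simp
  inv_mul_cancel x := by
    ext <;> simp
    ring

lemma commute_iff {x y : Heisenberg g} :
    Commute x y ↔ ∑ i, x.q i * y.p i = ∑ i, y.q i * x.p i := by
  refine ⟨fun h => ?_, fun h => ?_⟩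
  · have hs := congrArg s h.eq
    simp only [mul_s] at hs
    linarith
  · show x * y = y * x
    ext <;> simp [h, add_comm]

lemma p_eq_zero_of_commute {x : Heisenberg g} {i : Fin g}
    (h : Commute x ⟨0, 0, 0, Pi.single i 1⟩) : x.p i = 0 := by
  simpa [Pi.single_apply] using (commute_iff.mp h).symm

lemma q_eq_zero_of_commute {x : Heisenberg g} {i : Fin g}
    (h : Commute x ⟨0, 0, Pi.single i 1, 0⟩) : x.q i = 0 := by
  simpa [Pi.single_apply] using commute_iff.mp h

def centralHom : Multiplicative (ℤ × ℤ) →* Heisenberg g where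
  toFun x := ⟨x.toAdd.1, x.toAdd.2, 0, 0⟩
  map_one' := rfl
  map_mul' x y := by ext <;> simp

lemma centralHom_injective : Function.Injective (centralHom (g := g)) := by
  intro x y h
  have hs := congrArg s h
  have hz := congrArg z h
  exact Multiplicative.toAdd.injective (Prod.ext hs hz)

def pqHom : Heisenberg g →* (Fin g ⊕ Fin g → Multiplicative ℤ) where
  toFun x k := .ofAdd (Sum.elim x.p x.q k)
  map_one' := by funext k; cases k <;> rfl
  map_mul' x y := by funext k; cases k <;> rfl

end Heisenberg

lemma Subgroup.normal_of_le_center {G : Type*} [Group G] {H : Subgroup G}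
    (h : H ≤ Subgroup.center G) : H.Normal :=
  ⟨fun n hn x => by rw [Subgroup.mem_center_iff.mp (h hn) x, mul_inv_cancel_right]; exact hn⟩

lemma MonoidHom.ker_le_of_comp_eq_mk' {G A : Type*} [Group G] [Group A] {N : Subgroup G}
    [N.Normal] (f : G →* A) (ψ : A →* G ⧸ N) (h : ψ.comp f = QuotientGroup.mk' N) :
    f.ker ≤ N := fun x hx => by
  rw [← QuotientGroup.eq_one_iff, ← QuotientGroup.mk'_apply, ← h, comp_apply, hx, map_one]

abbrev G8 (g : ℕ) := PresentedGroup (rels8 g)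

namespace G8

open PresentedGroup Subgroup

variable {g : ℕ}

lemma commutatorElement_of_eq_one {x y : Gen8 g} (hne : x ≠ y) (hexc : ¬ x.exceptional y) :
    ⁅(of x : G8 g), (of y : G8 g)⁆ = 1 := by
  have h := one_of_mem (rels := rels8 g) (Or.inl ⟨x, y, hne, hexc, rfl⟩)
  rwa [map_commutatorElement] at h

lemma commutatorElement_of_a_of_b (i : Fin g) :
    ⁅(of (.a i) : G8 g), (of (.b i) : G8 g)⁆ = (of .sigma : G8 g) ^ 2 := by
  have h := one_of_mem (rels := rels8 g) (Or.inr ⟨i, rfl⟩)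
  rwa [map_mul, map_inv, map_pow, map_commutatorElement, mul_inv_eq_one] at h

lemma of_mem_center {t : Gen8 g} (ht : ∀ y, ¬ t.exceptional y) :
    (of t : G8 g) ∈ center (G8 g) := by
  refine mem_center_iff.mpr fun w => ?_
  suffices w ∈ centralizer {(of t : G8 g)} from mem_centralizer_singleton_iff.mp this
  refine generated_by _ _ (fun y => mem_centralizer_singleton_iff.mpr ?_) w
  obtain rfl | hne := eq_or_ne t y
  · rfl
  · exact (commutatorElement_eq_one_iff_commute.mp (commutatorElement_of_eq_one hne (ht y))).symm

def sigmaZeta (g : ℕ) : Subgroup (G8 g) := closure {of .sigma, of .zeta}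

lemma sigmaZeta_le_center : sigmaZeta g ≤ center (G8 g) := by
  refine closure_le _ |>.mpr ?_
  rintro _ (rfl | rfl) <;> refine of_mem_center ?_ <;>
    rintro y ⟨i, ⟨h, -⟩ | ⟨h, -⟩⟩ <;> cases h

lemma sigma_mem_sigmaZeta : (of .sigma : G8 g) ∈ sigmaZeta g := subset_closure (by simp)

lemma zeta_mem_sigmaZeta : (of .zeta : G8 g) ∈ sigmaZeta g := subset_closure (by simp)

instance : (sigmaZeta g).Normal := normal_of_le_center sigmaZeta_le_center

lemma commutatorElement_of_mem_sigmaZeta (x y : Gen8 g) :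
    ⁅(of x : G8 g), (of y : G8 g)⁆ ∈ sigmaZeta g := by
  by_cases hexc : x.exceptional y
  · have hσ := pow_mem (sigma_mem_sigmaZeta (g := g)) 2
    obtain ⟨i, ⟨rfl, rfl⟩ | ⟨rfl, rfl⟩⟩ := hexc
    · rwa [commutatorElement_of_a_of_b]
    · rwa [← commutatorElement_inv, commutatorElement_of_a_of_b, inv_mem_iff]
  · obtain rfl | hne := eq_or_ne x y
    · simp [commutatorElement_self, one_mem]
    · simp [commutatorElement_of_eq_one hne hexc, one_mem]

def genHeisenberg : Gen8 g → Heisenberg g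
  | .sigma => ⟨1, 0, 0, 0⟩
  | .zeta => ⟨0, 1, 0, 0⟩
  | .a i => ⟨0, 0, Pi.single i 1, 0⟩
  | .b i => ⟨0, 0, 0, Pi.single i 1⟩

lemma commute_genHeisenberg {x y : Gen8 g} (hexc : ¬ x.exceptional y) :
    Commute (genHeisenberg x) (genHeisenberg y) := by
  rw [Heisenberg.commute_iff]
  cases x <;> cases y <;> simp [genHeisenberg, Pi.single_apply]
  · rintro rfl
    exact hexc ⟨_, .inl ⟨rfl, rfl⟩⟩
  · rintro rfl
    exact hexc ⟨_, .inr ⟨rfl, rfl⟩⟩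

lemma commutatorElement_genHeisenberg_a_b (i : Fin g) :
    ⁅genHeisenberg (.a i), genHeisenberg (.b i)⁆ = genHeisenberg .sigma ^ 2 := by
  ext <;> simp [genHeisenberg, commutatorElement_def, pow_two, Pi.single_apply]

def toHeisenberg : G8 g →* Heisenberg g :=
  toGroup (f := genHeisenberg) <| by
    rintro r (⟨x, y, -, hexc, rfl⟩ | ⟨i, rfl⟩)
    · simp [map_commutatorElement, commutatorElement_eq_one_iff_commute.mpr
        (commute_genHeisenberg hexc)]
    · simp [map_commutatorElement, commutatorElement_genHeisenberg_a_b]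

@[simp] lemma toHeisenberg_of (x : Gen8 g) : toHeisenberg (of x : G8 g) = genHeisenberg x :=
  toGroup.of _

lemma toHeisenberg_sigma_zpow_mul_zeta_zpow (m n : ℤ) :
    toHeisenberg ((of .sigma : G8 g) ^ m * (of .zeta : G8 g) ^ n) =
      Heisenberg.centralHom (.ofAdd (m, n)) := by
  have hσ : genHeisenberg (g := g) .sigma = Heisenberg.centralHom (.ofAdd (1, 0)) := rfl
  have hζ : genHeisenberg (g := g) .zeta = Heisenberg.centralHom (.ofAdd (0, 1)) := rfl
  rw [map_mul, map_zpow, map_zpow, toHeisenberg_of, toHeisenberg_of, hσ, hζ,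
    ← map_zpow Heisenberg.centralHom, ← map_zpow Heisenberg.centralHom, ← map_mul]
  congr 1
  simp [← ofAdd_zsmul, ← ofAdd_add]

def toLattice : G8 g →* (Fin g ⊕ Fin g → Multiplicative ℤ) :=
  Heisenberg.pqHom.comp toHeisenberg

lemma toLattice_eq_one_of_mem_center {x : G8 g} (hx : x ∈ center (G8 g)) : toLattice x = 1 := by
  have hcomm (y : Gen8 g) : Commute (toHeisenberg x) (genHeisenberg y) := by
    simpa using (Commute.map (mem_center_iff.mp hx (of y)).symm toHeisenberg)
  funext k
  cases k with
  | inl i => exact congrArg Multiplicative.ofAdd (Heisenberg.p_eq_zero_of_commute (hcomm (.b i)))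
  | inr i => exact congrArg Multiplicative.ofAdd (Heisenberg.q_eq_zero_of_commute (hcomm (.a i)))

lemma commute_mk_of (x y : Gen8 g) :
    Commute (QuotientGroup.mk (of x) : G8 g ⧸ sigmaZeta g) (QuotientGroup.mk (of y)) := by
  rw [← commutatorElement_eq_one_iff_commute, ← QuotientGroup.mk'_apply, ← QuotientGroup.mk'_apply,
    ← map_commutatorElement, QuotientGroup.mk'_apply, QuotientGroup.eq_one_iff]
  exact commutatorElement_of_mem_sigmaZeta x y

def latticeGen : Fin g ⊕ Fin g → Gen8 g := Sum.elim .a .b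

lemma toLattice_of_latticeGen (k : Fin g ⊕ Fin g) :
    toLattice (of (latticeGen k) : G8 g) = Pi.mulSingle k (.ofAdd 1) := by
  funext l
  cases k <;> cases l <;> simp [toLattice, Heisenberg.pqHom, latticeGen, genHeisenberg,
    Pi.single_apply, Pi.mulSingle_apply, apply_ite Multiplicative.ofAdd]

lemma toLattice_of_sigma : toLattice (of .sigma : G8 g) = 1 := by
  funext k; cases k <;> rfl

lemma toLattice_of_zeta : toLattice (of .zeta : G8 g) = 1 := by
  funext k; cases k <;> rfl

def liftLattice : (Fin g ⊕ Fin g → Multiplicative ℤ) →* G8 g ⧸ sigmaZeta g :=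
  MonoidHom.noncommPiCoprod (fun k => zpowersHom _ (QuotientGroup.mk (of (latticeGen k))))
    fun _ _ _ _ _ => (commute_mk_of _ _).zpow_zpow _ _

lemma liftLattice_toLattice_of_latticeGen (k : Fin g ⊕ Fin g) :
    liftLattice (toLattice (of (latticeGen k) : G8 g)) = QuotientGroup.mk (of (latticeGen k)) := by
  rw [toLattice_of_latticeGen]
  exact (MonoidHom.noncommPiCoprod_mulSingle _ k _).trans (by simp)

lemma liftLattice_comp_toLattice :
    liftLattice.comp toLattice = QuotientGroup.mk' (sigmaZeta g) := by
  refine PresentedGroup.ext fun x => ?_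
  cases x with
  | a i => exact liftLattice_toLattice_of_latticeGen (.inl i)
  | b i => exact liftLattice_toLattice_of_latticeGen (.inr i)
  | sigma => simp [toLattice_of_sigma, (QuotientGroup.eq_one_iff _).mpr sigma_mem_sigmaZeta]
  | zeta => simp [toLattice_of_zeta, (QuotientGroup.eq_one_iff _).mpr zeta_mem_sigmaZeta]

lemma center_le_sigmaZeta : center (G8 g) ≤ sigmaZeta g := fun _ hx =>
  toLattice.ker_le_of_comp_eq_mk' liftLattice liftLattice_comp_toLattice
    (toLattice_eq_one_of_mem_center hx)

end G8

theorem stmt_8_general (g : ℕ) :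
    Subgroup.center (PresentedGroup (rels8 g)) =
      Subgroup.closure {PresentedGroup.of Gen8.sigma, PresentedGroup.of Gen8.zeta} ∧
    (∀ m n : ℤ, (PresentedGroup.of (rels := rels8 g) Gen8.sigma) ^ m *
        (PresentedGroup.of (rels := rels8 g) Gen8.zeta) ^ n = 1 → m = 0 ∧ n = 0) := by
  refine ⟨le_antisymm G8.center_le_sigmaZeta G8.sigmaZeta_le_center, fun m n h => ?_⟩
  have h' : Heisenberg.centralHom (.ofAdd (m, n)) = Heisenberg.centralHom (g := g) 1 := by
    rw [map_one, ← G8.toHeisenberg_sigma_zpow_mul_zeta_zpow, h, map_one]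
  simpa using Heisenberg.centralHom_injective h'

/-- In the presented group `G`, the center is the subgroup generated by `σ` and `ζ`,
and this subgroup is free abelian of rank 2. -/
theorem stmt_8 (g : ℕ) (hg : 1 ≤ g) :
    Subgroup.center (PresentedGroup (rels8 g)) =
      Subgroup.closure {PresentedGroup.of Gen8.sigma, PresentedGroup.of Gen8.zeta} ∧
    (∀ m n : ℤ, (PresentedGroup.of (rels := rels8 g) Gen8.sigma) ^ m *
        (PresentedGroup.of (rels := rels8 g) Gen8.zeta) ^ n = 1 → m = 0 ∧ n = 0) :=
  stmt_8_general g
end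

section
/- Let G be the group with presentation: generators σ, ζ, a₁, b₁, …, a_g, b_g (g ≥ 1); relations: all pairs of distinct generators commute except {a_i, b_i}, and [a_i, b_i] = σ² for each i. Then every element of G can be written uniquely in the form σ^p ζ^q a₁^{m₁} ⋯ a_g^{m_g} b₁^{n₁} ⋯ b_g^{n_g} with p, q, m_i, n_i ∈ ℤ. -/
/-- Generators: `σ`, `ζ`, and `aᵢ`, `bᵢ` for `i = 1, …, g`. -/
inductive Gen9 (g : ℕ)
  | sigma : Gen9 g
  | zeta : Gen9 g
  | a : Fin g → Gen9 g
  | b : Fin g → Gen9 g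

/-- `x` and `y` form an exceptional pair `{aᵢ, bᵢ}`. -/
def Gen9.exceptional {g : ℕ} (x y : Gen9 g) : Prop :=
  ∃ i : Fin g, (x = .a i ∧ y = .b i) ∨ (x = .b i ∧ y = .a i)

open scoped commutatorElement

/-- The defining relators: all pairs of distinct generators commute except the
pairs `{aᵢ, bᵢ}`, and `[aᵢ, bᵢ] = σ²`. -/
def rels9 (g : ℕ) : Set (FreeGroup (Gen9 g)) :=
  { r | ∃ x y : Gen9 g, x ≠ y ∧ ¬ Gen9.exceptional x y ∧
      r = ⁅FreeGroup.of x, FreeGroup.of y⁆ } ∪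
  { r | ∃ i : Fin g,
      r = ⁅FreeGroup.of (Gen9.a i), FreeGroup.of (Gen9.b i)⁆ *
            (FreeGroup.of (Gen9.sigma (g := g)) ^ 2)⁻¹ }

/-!
The coordinates `(p, q, m, n)` of a normal form word can be read off in the model group `Coord9`,
which is `(ℤ² × ℤ^g) ⋊ ℤ^g`: the relators hold there, so there is a homomorphism `toCoord9` from
the presented group to `Coord9`, and it sends the word with exponents `e` to `e`. This gives
uniqueness. For existence, multiplying a normal form word on the left by a generator gives the
normal form word of the product in `Coord9` (only `bᵢ` has to cross the `a`-block, and it picks up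
`σ^(-2 mᵢ)` on the way), so the set of elements equal to the word of their own coordinates is
closed under left multiplication by generators and their inverses, hence is everything.
-/

namespace List

variable {G ι : Type*} [Group G] [DecidableEq ι]

theorem prod_map_zpow_single_add (f : ι → G) (i : ι) (m : ι → ℤ)
    (hf : ∀ j, Commute (f i) (f j)) (l : List ι) :
    (l.map fun j => f j ^ (Pi.single i 1 + m : ι → ℤ) j).prod =
      f i ^ l.count i * (l.map fun j => f j ^ m j).prod := by
  induction l with
  | nil => simp
  | cons j t ih =>
    rw [map_cons, prod_cons, ih, map_cons, prod_cons, Pi.add_apply]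
    rcases eq_or_ne j i with rfl | hji
    · rw [count_cons_self, Pi.single_eq_same, zpow_add, zpow_one]
      group
    · rw [count_cons_of_ne hji, Pi.single_eq_of_ne hji, zero_add, ← mul_assoc, ← mul_assoc,
        (((hf j).pow_left _).zpow_right _).eq]

theorem mul_prod_map_zpow_of_semiconjBy (f : ι → G) {y z : G} (i : ι) (m : ι → ℤ)
    (hyi : SemiconjBy y (f i) (z * f i)) (hy : ∀ j ≠ i, Commute y (f j))
    (hz : ∀ j, Commute z (f j)) (l : List ι) :
    y * (l.map fun j => f j ^ m j).prod =
      z ^ (m i * l.count i) * (l.map fun j => f j ^ m j).prod * y := by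
  induction l with
  | nil => simp
  | cons j t ih =>
    have hzj : Commute (f j ^ m j) (z ^ (m i * t.count i)) :=
      (((hz j).zpow_left _).zpow_right _).symm
    rw [map_cons, prod_cons, ← mul_assoc]
    rcases eq_or_ne j i with rfl | hji
    · rw [(hyi.zpow_right (m j)).eq, (hz j).mul_zpow, mul_assoc, ih, count_cons_self]
      simp only [mul_assoc, hzj.left_comm]
      rw [← mul_assoc, ← zpow_add]
      push_cast; ring_nf
    · rw [((hy j hji).zpow_right _).eq, mul_assoc, ih, count_cons_of_ne hji]
      simp only [mul_assoc, hzj.left_comm]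

end List

/-- `⟨p, q, m, n⟩` stands for `σ^p ζ^q a^m b^n`; the correction `-2 ∑ nᵢ m'ᵢ` in the product
comes from moving `b^n` past `a^m'` using `bᵢ aᵢ = σ⁻² aᵢ bᵢ`. -/
@[ext] structure Coord9 (g : ℕ) where
  p : ℤ
  q : ℤ
  m : Fin g → ℤ
  n : Fin g → ℤ

namespace Coord9

variable {g : ℕ}

instance : Mul (Coord9 g) :=
  ⟨fun x y => ⟨x.p + y.p - 2 * ∑ i, x.n i * y.m i, x.q + y.q, x.m + y.m, x.n + y.n⟩⟩
instance : One (Coord9 g) := ⟨⟨0, 0, 0, 0⟩⟩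
instance : Inv (Coord9 g) := ⟨fun x => ⟨-x.p - 2 * ∑ i, x.n i * x.m i, -x.q, -x.m, -x.n⟩⟩

@[simp] lemma mul_p (x y : Coord9 g) : (x * y).p = x.p + y.p - 2 * ∑ i, x.n i * y.m i := rfl
@[simp] lemma mul_q (x y : Coord9 g) : (x * y).q = x.q + y.q := rfl
@[simp] lemma mul_m (x y : Coord9 g) : (x * y).m = x.m + y.m := rfl
@[simp] lemma mul_n (x y : Coord9 g) : (x * y).n = x.n + y.n := rfl
@[simp] lemma one_p : (1 : Coord9 g).p = 0 := rfl
@[simp] lemma one_q : (1 : Coord9 g).q = 0 := rfl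
@[simp] lemma one_m : (1 : Coord9 g).m = 0 := rfl
@[simp] lemma one_n : (1 : Coord9 g).n = 0 := rfl
@[simp] lemma inv_p (x : Coord9 g) : x⁻¹.p = -x.p - 2 * ∑ i, x.n i * x.m i := rfl
@[simp] lemma inv_q (x : Coord9 g) : x⁻¹.q = -x.q := rfl
@[simp] lemma inv_m (x : Coord9 g) : x⁻¹.m = -x.m := rfl
@[simp] lemma inv_n (x : Coord9 g) : x⁻¹.n = -x.n := rfl

instance : Group (Coord9 g) where
  mul_assoc x y z := by
    ext <;> simp only [mul_p, mul_q, mul_m, mul_n, Pi.add_apply, add_mul, mul_add,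
      Finset.sum_add_distrib] <;> ring
  one_mul x := by ext <;> simp
  mul_one x := by ext <;> simp
  inv_mul_cancel x := by
    ext <;> simp only [mul_p, mul_q, mul_m, mul_n, inv_p, inv_q, inv_m, inv_n, one_p, one_q, one_m,
      one_n, Pi.add_apply, Pi.neg_apply, Pi.zero_apply, neg_mul, Finset.sum_neg_distrib] <;> ring

theorem zpow_eq_of_sum_n_mul_m_eq_zero (x : Coord9 g) (hx : ∑ i, x.n i * x.m i = 0) (c : ℤ) :
    x ^ c = ⟨c * x.p, c * x.q, c • x.m, c • x.n⟩ := by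
  induction c using Int.induction_on with
  | zero => ext <;> simp
  | succ k ih =>
    rw [zpow_add_one, ih]
    ext <;> simp only [mul_p, mul_q, mul_m, mul_n, Pi.add_apply, Pi.smul_apply, smul_eq_mul,
      mul_assoc, ← Finset.mul_sum, hx] <;> ring
  | pred k ih =>
    rw [zpow_sub_one, ih]
    ext <;> simp only [mul_p, mul_q, mul_m, mul_n, inv_p, inv_q, inv_m, inv_n, Pi.add_apply,
      Pi.neg_apply, Pi.smul_apply, smul_eq_mul, mul_neg, neg_mul, neg_neg, mul_assoc,
      ← Finset.mul_sum, hx] <;> ring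

theorem list_prod_map_mk_m {ι : Type*} (v : ι → Fin g → ℤ) (l : List ι) :
    (l.map fun j => (⟨0, 0, v j, 0⟩ : Coord9 g)).prod = ⟨0, 0, (l.map v).sum, 0⟩ := by
  induction l with
  | nil => rfl
  | cons j t ih => rw [List.map_cons, List.prod_cons, ih]; ext <;> simp

theorem list_prod_map_mk_n {ι : Type*} (v : ι → Fin g → ℤ) (l : List ι) :
    (l.map fun j => (⟨0, 0, 0, v j⟩ : Coord9 g)).prod = ⟨0, 0, 0, (l.map v).sum⟩ := by
  induction l with
  | nil => rfl
  | cons j t ih => rw [List.map_cons, List.prod_cons, ih]; ext <;> simp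

def gen : Gen9 g → Coord9 g
  | .sigma => ⟨1, 0, 0, 0⟩
  | .zeta => ⟨0, 1, 0, 0⟩
  | .a i => ⟨0, 0, Pi.single i 1, 0⟩
  | .b i => ⟨0, 0, 0, Pi.single i 1⟩

theorem sum_gen_n_mul_gen_m_eq_zero {x y : Gen9 g} (h : ∀ i, ¬(x = .b i ∧ y = .a i)) :
    ∑ k, (gen x).n k * (gen y).m k = 0 := by
  cases x <;> cases y <;> simp_all [gen, Pi.single_apply, eq_comm]

theorem gen_zpow (x : Gen9 g) (c : ℤ) :
    gen x ^ c = ⟨c * (gen x).p, c * (gen x).q, c • (gen x).m, c • (gen x).n⟩ :=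
  zpow_eq_of_sum_n_mul_m_eq_zero _
    (sum_gen_n_mul_gen_m_eq_zero fun _ h => by cases h.1.symm.trans h.2) c

theorem lift_gen_eq_one_of_mem_rels9 : ∀ r ∈ rels9 g, FreeGroup.lift gen r = 1 := by
  rintro r (⟨x, y, -, hexc, rfl⟩ | ⟨i, rfl⟩)
  · have hxy := sum_gen_n_mul_gen_m_eq_zero fun i h => hexc ⟨i, .inr h⟩
    have hyx := sum_gen_n_mul_gen_m_eq_zero fun i h => hexc ⟨i, .inl h.symm⟩
    rw [map_commutatorElement, FreeGroup.lift_apply_of, FreeGroup.lift_apply_of,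
      commutatorElement_eq_one_iff_mul_comm]
    ext <;> simp [hxy, hyx, add_comm]
  · rw [map_mul, map_inv, map_pow, map_commutatorElement, mul_inv_eq_one, commutatorElement_def]
    ext <;> simp [gen, pow_two, Pi.single_apply]

end Coord9

namespace Rels9

open PresentedGroup

variable {g : ℕ}

local notation "𝐆" => PresentedGroup (rels9 g)
local notation "σ" => (of Gen9.sigma : 𝐆)
local notation "ζ" => (of Gen9.zeta : 𝐆)

def toCoord9 : 𝐆 →* Coord9 g :=
  toGroup Coord9.lift_gen_eq_one_of_mem_rels9

theorem commute_of_of {x y : Gen9 g} (hxy : x ≠ y) (hexc : ¬ x.exceptional y) :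
    Commute (of x : 𝐆) (of y) := by
  have h := one_of_mem (rels := rels9 g) (.inl ⟨x, y, hxy, hexc, rfl⟩)
  rwa [map_commutatorElement, commutatorElement_eq_one_iff_commute] at h

theorem commute_sigma_of (x : Gen9 g) : Commute σ (of x) := by
  rcases eq_or_ne x .sigma with rfl | h
  · exact .refl _
  · exact commute_of_of h.symm (by simp [Gen9.exceptional])

theorem commute_zeta_of (x : Gen9 g) : Commute ζ (of x) := by
  rcases eq_or_ne x .zeta with rfl | h
  · exact .refl _
  · exact commute_of_of h.symm (by simp [Gen9.exceptional])

theorem commute_of_a_of_a (i j : Fin g) : Commute (of (.a i) : 𝐆) (of (.a j)) := by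
  rcases eq_or_ne i j with rfl | h
  · exact .refl _
  · exact commute_of_of (by simpa using h) (by simp [Gen9.exceptional])

theorem commute_of_b_of_b (i j : Fin g) : Commute (of (.b i) : 𝐆) (of (.b j)) := by
  rcases eq_or_ne i j with rfl | h
  · exact .refl _
  · exact commute_of_of (by simpa using h) (by simp [Gen9.exceptional])

theorem commute_of_b_of_a {i j : Fin g} (h : j ≠ i) : Commute (of (.b i) : 𝐆) (of (.a j)) :=
  commute_of_of (by simp) (by simp [Gen9.exceptional, h])

theorem semiconjBy_of_b_of_a (i : Fin g) :
    SemiconjBy (of (.b i) : 𝐆) (of (.a i)) (σ ^ (-2 : ℤ) * of (.a i)) := by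
  have h : ⁅(of (.a i) : 𝐆), of (.b i)⁆ = σ ^ 2 := by
    have h := one_of_mem (rels := rels9 g) (.inr ⟨i, rfl⟩)
    rwa [map_mul, map_inv, map_pow, map_commutatorElement, mul_inv_eq_one] at h
  rw [SemiconjBy, zpow_neg, zpow_ofNat, ← h, commutatorElement_def]
  group

def prodA (m : Fin g → ℤ) : 𝐆 := ((List.finRange g).map fun i => of (.a i) ^ m i).prod

def prodB (n : Fin g → ℤ) : 𝐆 := ((List.finRange g).map fun i => of (.b i) ^ n i).prod

def nf9 (e : Coord9 g) : 𝐆 := σ ^ e.p * ζ ^ e.q * prodA e.m * prodB e.n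

theorem of_a_mul_prodA (i : Fin g) (m : Fin g → ℤ) :
    of (.a i) * prodA m = prodA (Pi.single i 1 + m) := by
  rw [prodA, prodA, List.prod_map_zpow_single_add (fun j => (of (.a j) : 𝐆)) i m
    (commute_of_a_of_a i), List.count_finRange, pow_one]

theorem of_b_mul_prodB (i : Fin g) (n : Fin g → ℤ) :
    of (.b i) * prodB n = prodB (Pi.single i 1 + n) := by
  rw [prodB, prodB, List.prod_map_zpow_single_add (fun j => (of (.b j) : 𝐆)) i n
    (commute_of_b_of_b i), List.count_finRange, pow_one]

theorem of_b_mul_prodA (i : Fin g) (m : Fin g → ℤ) :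
    of (.b i) * prodA m = σ ^ (-2 * m i) * prodA m * of (.b i) := by
  rw [prodA, List.mul_prod_map_zpow_of_semiconjBy (fun j => (of (.a j) : 𝐆)) i m
    (semiconjBy_of_b_of_a i) (fun j hj => commute_of_b_of_a hj)
    (fun j => (commute_sigma_of (.a j)).zpow_left _), List.count_finRange, ← zpow_mul]
  ring_nf

theorem nf9_gen_mul (x : Gen9 g) (e : Coord9 g) : nf9 (Coord9.gen x * e) = of x * nf9 e := by
  cases x with
  | sigma =>
    have : Coord9.gen .sigma * e = ⟨1 + e.p, e.q, e.m, e.n⟩ := by ext <;> simp [Coord9.gen]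
    simp only [this, nf9, zpow_add, zpow_one, mul_assoc]
  | zeta =>
    have : Coord9.gen .zeta * e = ⟨e.p, 1 + e.q, e.m, e.n⟩ := by ext <;> simp [Coord9.gen]
    simp only [this, nf9, zpow_add, zpow_one, mul_assoc,
      ((commute_sigma_of .zeta).zpow_left e.p).left_comm]
  | a i =>
    have : Coord9.gen (.a i) * e = ⟨e.p, e.q, Pi.single i 1 + e.m, e.n⟩ := by
      ext <;> simp [Coord9.gen, Pi.single_apply]
    simp only [this, nf9, ← of_a_mul_prodA, mul_assoc,
      ((commute_sigma_of (.a i)).zpow_left e.p).left_comm,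
      ((commute_zeta_of (.a i)).zpow_left e.q).left_comm]
  | b i =>
    have : Coord9.gen (.b i) * e = ⟨e.p - 2 * e.m i, e.q, e.m, Pi.single i 1 + e.n⟩ := by
      ext <;> simp [Coord9.gen, Pi.single_apply]
    have hσ : Commute (of (.b i) : 𝐆) (σ ^ e.p) := ((commute_sigma_of (.b i)).zpow_left e.p).symm
    have hζ : Commute (of (.b i) : 𝐆) (ζ ^ e.q) := ((commute_zeta_of (.b i)).zpow_left e.q).symm
    have hζσ : Commute (ζ ^ e.q) (σ ^ (-2 * e.m i)) :=
      ((commute_sigma_of .zeta).zpow_zpow _ _).symm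
    simp only [this, nf9, mul_assoc, hσ.left_comm, hζ.left_comm]
    rw [← mul_assoc (of (Gen9.b i) : 𝐆), of_b_mul_prodA, mul_assoc, mul_assoc, of_b_mul_prodB,
      hζσ.left_comm, ← mul_assoc (σ ^ e.p), ← zpow_add, neg_mul, ← sub_eq_add_neg]

theorem toCoord9_of (x : Gen9 g) : toCoord9 (of x) = Coord9.gen x := toGroup.of _

theorem toCoord9_prodA (m : Fin g → ℤ) : toCoord9 (prodA m) = ⟨0, 0, m, 0⟩ := by
  have h : toCoord9 ∘ (fun i => (of (.a i) : 𝐆) ^ m i) = fun i => ⟨0, 0, Pi.single i (m i), 0⟩ :=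
    funext fun i => by
      rw [Function.comp_apply, map_zpow, toCoord9_of, Coord9.gen_zpow]
      ext <;> simp [Coord9.gen, Pi.single_apply]
  rw [prodA, map_list_prod, List.map_map, h, Coord9.list_prod_map_mk_m, ← Fin.sum_univ_def,
    Finset.univ_sum_single]

theorem toCoord9_prodB (n : Fin g → ℤ) : toCoord9 (prodB n) = ⟨0, 0, 0, n⟩ := by
  have h : toCoord9 ∘ (fun i => (of (.b i) : 𝐆) ^ n i) = fun i => ⟨0, 0, 0, Pi.single i (n i)⟩ :=
    funext fun i => by
      rw [Function.comp_apply, map_zpow, toCoord9_of, Coord9.gen_zpow]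
      ext <;> simp [Coord9.gen, Pi.single_apply]
  rw [prodB, map_list_prod, List.map_map, h, Coord9.list_prod_map_mk_n, ← Fin.sum_univ_def,
    Finset.univ_sum_single]

theorem toCoord9_nf9 (e : Coord9 g) : toCoord9 (nf9 e) = e := by
  rw [nf9, map_mul, map_mul, map_mul, map_zpow, map_zpow, toCoord9_of, toCoord9_of,
    Coord9.gen_zpow, Coord9.gen_zpow, toCoord9_prodA, toCoord9_prodB]
  ext <;> simp [Coord9.gen]

theorem nf9_one : nf9 (1 : Coord9 g) = 1 := by
  simp [nf9, prodA, prodB]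

theorem nf9_toCoord9 (x : 𝐆) : nf9 (toCoord9 x) = x := by
  have hx : x ∈ Subgroup.closure (Set.range of) := by rw [closure_range_of]; trivial
  induction hx using Subgroup.closure_induction_left with
  | one => rw [map_one, nf9_one]
  | mul_left _ hgen y _ ih =>
    obtain ⟨x, rfl⟩ := hgen
    rw [map_mul, toCoord9_of, nf9_gen_mul, ih]
  | inv_mul_cancel _ hgen y _ ih =>
    obtain ⟨x, rfl⟩ := hgen
    rw [map_mul, map_inv, toCoord9_of, eq_inv_mul_iff_mul_eq, ← nf9_gen_mul, mul_inv_cancel_left,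
      ih]

end Rels9

theorem stmt_9_general (g : ℕ) (x : PresentedGroup (rels9 g)) :
    ∃! e : ℤ × ℤ × (Fin g → ℤ) × (Fin g → ℤ),
      x = (PresentedGroup.of (rels := rels9 g) Gen9.sigma) ^ e.1 *
          (PresentedGroup.of (rels := rels9 g) Gen9.zeta) ^ e.2.1 *
          ((List.finRange g).map
            (fun i => (PresentedGroup.of (rels := rels9 g) (Gen9.a i)) ^ e.2.2.1 i)).prod *
          ((List.finRange g).map
            (fun i => (PresentedGroup.of (rels := rels9 g) (Gen9.b i)) ^ e.2.2.2 i)).prod := by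
  refine ⟨⟨(Rels9.toCoord9 x).p, (Rels9.toCoord9 x).q, (Rels9.toCoord9 x).m,
    (Rels9.toCoord9 x).n⟩, (Rels9.nf9_toCoord9 x).symm, ?_⟩
  rintro ⟨p, q, m, n⟩ hx
  have : Rels9.toCoord9 x = ⟨p, q, m, n⟩ := by
    rw [show x = Rels9.nf9 ⟨p, q, m, n⟩ from hx, Rels9.toCoord9_nf9]
  simp [this]

/-- Every element of the presented group `G` can be written uniquely in the form
`σ^p ζ^q a₁^{m₁} ⋯ a_g^{m_g} b₁^{n₁} ⋯ b_g^{n_g}`. -/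
theorem stmt_9 (g : ℕ) (hg : 1 ≤ g) (x : PresentedGroup (rels9 g)) :
    ∃! e : ℤ × ℤ × (Fin g → ℤ) × (Fin g → ℤ),
      x = (PresentedGroup.of (rels := rels9 g) Gen9.sigma) ^ e.1 *
          (PresentedGroup.of (rels := rels9 g) Gen9.zeta) ^ e.2.1 *
          ((List.finRange g).map
            (fun i => (PresentedGroup.of (rels := rels9 g) (Gen9.a i)) ^ e.2.2.1 i)).prod *
          ((List.finRange g).map
            (fun i => (PresentedGroup.of (rels := rels9 g) (Gen9.b i)) ^ e.2.2.2 i)).prod :=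
  stmt_9_general g x
end

section
/- Let H be the group with presentation as in: generators σ, σ̃, ζ and a_i, b_i, ã_i, b̃_i for i = 1,…,g (g ≥ 1); relations: all pairs of distinct generators commute except {a_i, b_i}, {ã_i, b̃_i}, {b_i, ã_i}, {a_i, b̃_i}; [a_i, b_i] = σ², [ã_i, b̃_i] = σ̃², [a_i, b̃_i] = [ã_i, b_i] = ζ. Then every element of H has a unique expression σ^p σ̃^q ζ^r ∏_i a_i^{m_i} ã_i^{m̃_i} ∏_i b_i^{n_i} b̃_i^{ñ_i}, so H ≅ (ℤ³ × ℤ^{2g}) ⋊ ℤ^{2g}. -/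
/-- Generators: `σ`, `σ̃`, `ζ`, and `aᵢ`, `bᵢ`, `ãᵢ`, `b̃ᵢ` for `i = 1, …, g`. -/
inductive Gen11 (g : ℕ)
  | sigma : Gen11 g
  | sigmat : Gen11 g
  | zeta : Gen11 g
  | a : Fin g → Gen11 g
  | b : Fin g → Gen11 g
  | at_ : Fin g → Gen11 g
  | bt : Fin g → Gen11 g

/-- `x` and `y` form one of the exceptional (non-commuting) pairs
`{aᵢ, bᵢ}`, `{ãᵢ, b̃ᵢ}`, `{bᵢ, ãᵢ}`, `{aᵢ, b̃ᵢ}`. -/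
def Gen11.exceptional {g : ℕ} (x y : Gen11 g) : Prop :=
  ∃ i : Fin g,
    (x = .a i ∧ y = .b i) ∨ (x = .b i ∧ y = .a i) ∨
    (x = .at_ i ∧ y = .bt i) ∨ (x = .bt i ∧ y = .at_ i) ∨
    (x = .b i ∧ y = .at_ i) ∨ (x = .at_ i ∧ y = .b i) ∨
    (x = .a i ∧ y = .bt i) ∨ (x = .bt i ∧ y = .a i)

open scoped commutatorElement

/-- The defining relators: all pairs of distinct generators commute except the
exceptional pairs, and `[aᵢ,bᵢ] = σ²`, `[ãᵢ,b̃ᵢ] = σ̃²`, `[aᵢ,b̃ᵢ] = [ãᵢ,bᵢ] = ζ`. -/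
def rels11 (g : ℕ) : Set (FreeGroup (Gen11 g)) :=
  { r | ∃ x y : Gen11 g, x ≠ y ∧ ¬ Gen11.exceptional x y ∧
      r = ⁅FreeGroup.of x, FreeGroup.of y⁆ } ∪
  { r | ∃ i : Fin g,
      r = ⁅FreeGroup.of (Gen11.a i), FreeGroup.of (Gen11.b i)⁆ *
            (FreeGroup.of (Gen11.sigma (g := g)) ^ 2)⁻¹ } ∪
  { r | ∃ i : Fin g,
      r = ⁅FreeGroup.of (Gen11.at_ i), FreeGroup.of (Gen11.bt i)⁆ *
            (FreeGroup.of (Gen11.sigmat (g := g)) ^ 2)⁻¹ } ∪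
  { r | ∃ i : Fin g,
      r = ⁅FreeGroup.of (Gen11.a i), FreeGroup.of (Gen11.bt i)⁆ *
            (FreeGroup.of (Gen11.zeta (g := g)))⁻¹ } ∪
  { r | ∃ i : Fin g,
      r = ⁅FreeGroup.of (Gen11.at_ i), FreeGroup.of (Gen11.b i)⁆ *
            (FreeGroup.of (Gen11.zeta (g := g)))⁻¹ }

/-!
Conjugation by `bᵢ` multiplies `aᵢ` by `σ⁻²` and `ãᵢ` by `ζ⁻¹`, conjugation by `b̃ᵢ` multiplies
`aᵢ` by `ζ⁻¹` and `ãᵢ` by `σ̃⁻²`, and all other pairs of generators commute with each other, so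
`σ, σ̃, ζ` are central. Hence a generator times a normal form is again a normal form, whose
exponents are those of the product in the explicit group `(ℤ³ × ℤ^{2g}) ⋊ ℤ^{2g}`
(`Rels11.Model`); since every element is a product of generators, every element has a normal
form. Uniqueness holds because the homomorphism from the presented group to the model sends
each normal form to its tuple of exponents.
-/

section CommutingFamilies

variable {G : Type*} [Group G]

theorem List.prod_map_mul_of_commute {ι : Type*} (l : List ι) {f h : ι → G}
    (hc : ∀ i j, Commute (h i) (f j)) :
    (l.map fun i => f i * h i).prod = (l.map f).prod * (l.map h).prod := by
  induction l with
  | nil => simp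
  | cons x l ih =>
    have hx : Commute (h x) (l.map f).prod :=
      Commute.list_prod_right _ _ (by simpa using fun j _ => hc x j)
    simp only [List.map_cons, List.prod_cons, ih, mul_assoc, hx.left_comm]

theorem conj_list_prod_of_mem_center {ι : Type*} (l : List ι) {c : G} {f z : ι → G}
    (hz : ∀ i, z i ∈ Subgroup.center G) (hc : ∀ i, c * f i * c⁻¹ = z i * f i) :
    c * (l.map f).prod * c⁻¹ = (l.map z).prod * (l.map f).prod := by
  rw [← MulAut.conj_apply, map_list_prod, List.map_map]
  simp only [Function.comp_def, MulAut.conj_apply, hc]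
  exact l.prod_map_mul_of_commute fun i j => Subgroup.mem_center_iff.mp (hz j) (f i)

theorem conj_zpow_mul_zpow {c x y s t : G} (hs : s ∈ Subgroup.center G)
    (ht : t ∈ Subgroup.center G) (hx : c * x * c⁻¹ = s * x) (hy : c * y * c⁻¹ = t * y)
    (m n : ℤ) : c * (x ^ m * y ^ n) * c⁻¹ = s ^ m * t ^ n * (x ^ m * y ^ n) := by
  have hsx : Commute s x := (Subgroup.mem_center_iff.mp hs x).symm
  have hty : Commute t y := (Subgroup.mem_center_iff.mp ht y).symm
  have htx : Commute (t ^ n) (x ^ m) := (Subgroup.mem_center_iff.mp (zpow_mem ht n) (x ^ m)).symm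
  rw [← MulAut.conj_apply, map_mul, map_zpow, map_zpow, MulAut.conj_apply, MulAut.conj_apply, hx,
    hy, hsx.mul_zpow, hty.mul_zpow]
  simp only [mul_assoc, htx.left_comm]

theorem conj_eq_inv_mul_of_commutatorElement_eq {x y s : G} (h : ⁅x, y⁆ = s) :
    y * x * y⁻¹ = s⁻¹ * x := by
  rw [← h, commutatorElement_def]; group

variable {g : ℕ} (x y : Fin g → G)

def prodZPow (m n : Fin g → ℤ) : G :=
  ((List.finRange g).map fun i => x i ^ m i * y i ^ n i).prod

theorem prodZPow_zero : prodZPow x y 0 0 = 1 := by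
  simp [prodZPow]

theorem prodZPow_single_zero (j : Fin g) : prodZPow x y (Pi.single j 1) 0 = x j := by
  rw [prodZPow, List.prod_map_eq_pow_single j _ fun i hij _ => by simp [hij],
    List.count_finRange]
  simp

theorem prodZPow_zero_single (j : Fin g) : prodZPow x y 0 (Pi.single j 1) = y j := by
  rw [prodZPow, List.prod_map_eq_pow_single j _ fun i hij _ => by simp [hij],
    List.count_finRange]
  simp

theorem map_prodZPow {G' : Type*} [Group G'] (f : G →* G') (m n : Fin g → ℤ) :
    f (prodZPow x y m n) = prodZPow (fun i => f (x i)) (fun i => f (y i)) m n := by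
  simp [prodZPow, map_list_prod, Function.comp_def]

theorem prodZPow_ofAdd_single (f : Multiplicative ((Fin g → ℤ) × (Fin g → ℤ)) →* G)
    (m n : Fin g → ℤ) :
    prodZPow (fun i => f (.ofAdd (Pi.single i 1, 0))) (fun i => f (.ofAdd (0, Pi.single i 1))) m n =
      f (.ofAdd (m, n)) := by
  have hfactor : ∀ i, f (.ofAdd (Pi.single i 1, 0)) ^ m i * f (.ofAdd (0, Pi.single i 1)) ^ n i =
      f (.ofAdd (Pi.single i (m i), Pi.single i (n i))) := by
    intro i
    rw [← map_zpow f, ← map_zpow f, ← map_mul, ← ofAdd_zsmul, ← ofAdd_zsmul, ← ofAdd_add]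
    congr 2
    ext j <;> simp [Pi.single_apply]
  rw [prodZPow, List.map_congr_left fun i _ => hfactor i]
  trans f ((List.finRange g).map fun i => .ofAdd (Pi.single i (m i), Pi.single i (n i))).prod
  · rw [map_list_prod, List.map_map]; rfl
  rw [← Fin.prod_univ_def, ← ofAdd_sum]
  congr 2
  ext <;> simp [Prod.fst_sum, Prod.snd_sum]

variable {x y}

theorem prodZPow_add (hxx : ∀ i j, Commute (x i) (x j)) (hxy : ∀ i j, Commute (x i) (y j))
    (hyy : ∀ i j, Commute (y i) (y j)) (m n m' n' : Fin g → ℤ) :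
    prodZPow x y (m + m') (n + n') = prodZPow x y m n * prodZPow x y m' n' := by
  have hfactor : ∀ i, x i ^ (m + m') i * y i ^ (n + n') i =
      x i ^ m i * y i ^ n i * (x i ^ m' i * y i ^ n' i) := by
    intro i
    simp only [Pi.add_apply, zpow_add, mul_assoc, ((hxy i i).zpow_zpow (m' i) (n i)).symm.left_comm]
  rw [prodZPow, List.map_congr_left fun i _ => hfactor i]
  exact List.prod_map_mul_of_commute _ fun i j =>
    (((hxx i j).zpow_zpow _ _).mul_left ((hxy j i).symm.zpow_zpow _ _)).mul_right
      (((hxy i j).zpow_zpow _ _).mul_left ((hyy i j).zpow_zpow _ _))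

theorem conj_prodZPow {c s t : G} (j : Fin g) (hs : s ∈ Subgroup.center G)
    (ht : t ∈ Subgroup.center G) (hx : c * x j * c⁻¹ = s * x j) (hy : c * y j * c⁻¹ = t * y j)
    (hxc : ∀ i ≠ j, Commute c (x i)) (hyc : ∀ i ≠ j, Commute c (y i)) (m n : Fin g → ℤ) :
    c * prodZPow x y m n * c⁻¹ = s ^ m j * t ^ n j * prodZPow x y m n := by
  classical
  let z i := if i = j then s ^ m i * t ^ n i else 1
  have hz : ∀ i, z i ∈ Subgroup.center G := by
    intro i
    by_cases hij : i = j
    · simpa [z, hij] using mul_mem (zpow_mem hs (m j)) (zpow_mem ht (n j))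
    · simp [z, hij]
  have hc : ∀ i, c * (x i ^ m i * y i ^ n i) * c⁻¹ = z i * (x i ^ m i * y i ^ n i) := by
    intro i
    by_cases hij : i = j
    · subst hij
      simpa [z] using conj_zpow_mul_zpow hs ht hx hy (m i) (n i)
    · simp only [z, hij, if_false, one_mul]
      rw [(((hxc i hij).zpow_right (m i)).mul_right ((hyc i hij).zpow_right (n i))).eq,
        mul_inv_cancel_right]
  rw [prodZPow, conj_list_prod_of_mem_center _ hz hc,
    List.prod_map_eq_pow_single j _ fun i hij _ => by simp [z, hij], List.count_finRange]
  simp [z]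

end CommutingFamilies

namespace Rels11

@[ext] structure Model (g : ℕ) where
  p : ℤ
  q : ℤ
  r : ℤ
  m : Fin g → ℤ
  mt : Fin g → ℤ
  n : Fin g → ℤ
  nt : Fin g → ℤ

namespace Model

variable {g : ℕ}

/- `e` stands for `σ^p σ̃^q ζ^r ∏ᵢ aᵢ^{mᵢ} ãᵢ^{mtᵢ} ∏ᵢ bᵢ^{nᵢ} b̃ᵢ^{ntᵢ}`; in a product `e * f` the
correction terms come from moving the `b`-part of `e` past the `a`-part of `f`. -/
@[simps -fullyApplied] instance : Mul (Model g) :=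
  ⟨fun e f => ⟨e.p + f.p - 2 * (e.n ⬝ᵥ f.m), e.q + f.q - 2 * (e.nt ⬝ᵥ f.mt),
    e.r + f.r - e.n ⬝ᵥ f.mt - e.nt ⬝ᵥ f.m, e.m + f.m, e.mt + f.mt, e.n + f.n, e.nt + f.nt⟩⟩

@[simps -fullyApplied] instance : One (Model g) := ⟨⟨0, 0, 0, 0, 0, 0, 0⟩⟩

@[simps -fullyApplied] instance : Inv (Model g) :=
  ⟨fun e => ⟨-e.p - 2 * (e.n ⬝ᵥ e.m), -e.q - 2 * (e.nt ⬝ᵥ e.mt),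
    -e.r - e.n ⬝ᵥ e.mt - e.nt ⬝ᵥ e.m, -e.m, -e.mt, -e.n, -e.nt⟩⟩

instance : Group (Model g) where
  mul_assoc e f h := by ext <;> simp <;> ring
  one_mul e := by ext <;> simp
  mul_one e := by ext <;> simp
  inv_mul_cancel e := by ext <;> simp <;> ring

@[simps -fullyApplied] def ofZ : Multiplicative (ℤ × ℤ × ℤ) →* Model g where
  toFun v := ⟨v.toAdd.1, v.toAdd.2.1, v.toAdd.2.2, 0, 0, 0, 0⟩
  map_one' := rfl
  map_mul' v w := by ext <;> simp

@[simps -fullyApplied] def ofA : Multiplicative ((Fin g → ℤ) × (Fin g → ℤ)) →* Model g where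
  toFun v := ⟨0, 0, 0, v.toAdd.1, v.toAdd.2, 0, 0⟩
  map_one' := rfl
  map_mul' v w := by ext <;> simp

@[simps -fullyApplied] def ofB : Multiplicative ((Fin g → ℤ) × (Fin g → ℤ)) →* Model g where
  toFun v := ⟨0, 0, 0, 0, 0, v.toAdd.1, v.toAdd.2⟩
  map_one' := rfl
  map_mul' v w := by ext <;> simp

theorem ofZ_mul_ofA_mul_ofB (e : Model g) :
    ofZ (.ofAdd (e.p, e.q, e.r)) * ofA (.ofAdd (e.m, e.mt)) * ofB (.ofAdd (e.n, e.nt)) = e := by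
  ext <;> simp

end Model

open Model

variable {g : ℕ}

def genImage : Gen11 g → Model g
  | .sigma => ofZ (.ofAdd (1, 0, 0))
  | .sigmat => ofZ (.ofAdd (0, 1, 0))
  | .zeta => ofZ (.ofAdd (0, 0, 1))
  | .a i => ofA (.ofAdd (Pi.single i 1, 0))
  | .at_ i => ofA (.ofAdd (0, Pi.single i 1))
  | .b i => ofB (.ofAdd (Pi.single i 1, 0))
  | .bt i => ofB (.ofAdd (0, Pi.single i 1))

theorem genImage_commute {x y : Gen11 g} (hexc : ¬ Gen11.exceptional x y) :
    Commute (genImage x) (genImage y) := by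
  cases x <;> cases y <;> simp [Commute, SemiconjBy, Model.ext_iff, genImage, Gen11.exceptional,
      Pi.single_apply] at * <;>
    first | exact add_comm _ _ | exact Ne.symm hexc | exact hexc

theorem lift_genImage_eq_one : ∀ r ∈ rels11 g, FreeGroup.lift genImage r = 1 := by
  rintro r ((((⟨x, y, -, hexc, rfl⟩ | ⟨i, rfl⟩) | ⟨i, rfl⟩) | ⟨i, rfl⟩) | ⟨i, rfl⟩)
  · simpa [map_commutatorElement, commutatorElement_eq_one_iff_commute] using genImage_commute hexc
  all_goals
    simp only [map_mul, map_inv, map_pow, map_commutatorElement, FreeGroup.lift_apply_of,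
      mul_inv_eq_one]
    ext <;> simp [genImage, commutatorElement_def, pow_two]

def toModel : PresentedGroup (rels11 g) →* Model g := PresentedGroup.toGroup lift_genImage_eq_one

@[simp] theorem toModel_of (x : Gen11 g) : toModel (PresentedGroup.of x) = genImage x :=
  PresentedGroup.toGroup.of lift_genImage_eq_one

abbrev gen (x : Gen11 g) : PresentedGroup (rels11 g) := PresentedGroup.of x

theorem gen_commute {x y : Gen11 g} (hexc : ¬ Gen11.exceptional x y) :
    Commute (gen x) (gen y) := by
  obtain rfl | hxy := eq_or_ne x y
  · exact Commute.refl _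
  have h := PresentedGroup.one_of_mem (rels := rels11 g)
    (.inl <| .inl <| .inl <| .inl ⟨x, y, hxy, hexc, rfl⟩)
  rwa [map_commutatorElement, commutatorElement_eq_one_iff_commute] at h

theorem commutatorElement_gen_eq {x y : Gen11 g} {s : FreeGroup (Gen11 g)}
    (h : ⁅FreeGroup.of x, FreeGroup.of y⁆ * s⁻¹ ∈ rels11 g) :
    ⁅gen x, gen y⁆ = PresentedGroup.mk _ s := by
  rw [← PresentedGroup.mk_eq_mk_of_mul_inv_mem h, map_commutatorElement]; rfl

theorem gen_b_conj_a (i : Fin g) :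
    gen (.b i) * gen (.a i) * (gen (.b i))⁻¹ = (gen .sigma ^ 2)⁻¹ * gen (.a i) :=
  conj_eq_inv_mul_of_commutatorElement_eq <|
    commutatorElement_gen_eq (.inl <| .inl <| .inl <| .inr ⟨i, rfl⟩)

theorem gen_bt_conj_at (i : Fin g) :
    gen (.bt i) * gen (.at_ i) * (gen (.bt i))⁻¹ = (gen .sigmat ^ 2)⁻¹ * gen (.at_ i) :=
  conj_eq_inv_mul_of_commutatorElement_eq <|
    commutatorElement_gen_eq (.inl <| .inl <| .inr ⟨i, rfl⟩)

theorem gen_bt_conj_a (i : Fin g) :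
    gen (.bt i) * gen (.a i) * (gen (.bt i))⁻¹ = (gen .zeta)⁻¹ * gen (.a i) :=
  conj_eq_inv_mul_of_commutatorElement_eq <| commutatorElement_gen_eq (.inl <| .inr ⟨i, rfl⟩)

theorem gen_b_conj_at (i : Fin g) :
    gen (.b i) * gen (.at_ i) * (gen (.b i))⁻¹ = (gen .zeta)⁻¹ * gen (.at_ i) :=
  conj_eq_inv_mul_of_commutatorElement_eq <| commutatorElement_gen_eq (.inr ⟨i, rfl⟩)

theorem gen_mem_center {x : Gen11 g} (hx : ∀ y, ¬ Gen11.exceptional x y) :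
    gen x ∈ Subgroup.center (PresentedGroup (rels11 g)) := by
  have hle : ∀ u, u ∈ Subgroup.centralizer {gen x} := PresentedGroup.generated_by _ _ fun y =>
    Subgroup.mem_centralizer_singleton_iff.mpr (gen_commute (hx y)).symm.eq
  exact Subgroup.mem_center_iff.mpr fun u => Subgroup.mem_centralizer_singleton_iff.mp (hle u)

theorem gen_sigma_mem_center : gen (.sigma : Gen11 g) ∈ Subgroup.center _ :=
  gen_mem_center (by simp [Gen11.exceptional])

theorem gen_sigmat_mem_center : gen (.sigmat : Gen11 g) ∈ Subgroup.center _ :=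
  gen_mem_center (by simp [Gen11.exceptional])

theorem gen_zeta_mem_center : gen (.zeta : Gen11 g) ∈ Subgroup.center _ :=
  gen_mem_center (by simp [Gen11.exceptional])

def central (p q r : ℤ) : PresentedGroup (rels11 g) :=
  gen .sigma ^ p * gen .sigmat ^ q * gen .zeta ^ r

theorem central_mem_center (p q r : ℤ) : central (g := g) p q r ∈ Subgroup.center _ :=
  mul_mem (mul_mem (zpow_mem gen_sigma_mem_center p) (zpow_mem gen_sigmat_mem_center q))
    (zpow_mem gen_zeta_mem_center r)

theorem commute_central (u : PresentedGroup (rels11 g)) (p q r : ℤ) : Commute u (central p q r) :=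
  Subgroup.mem_center_iff.mp (central_mem_center p q r) u

theorem central_mul_central (p q r p' q' r' : ℤ) :
    central (g := g) p q r * central p' q' r' = central (p + p') (q + q') (r + r') := by
  have hσ (u : PresentedGroup (rels11 g)) : Commute u (gen .sigma ^ p') :=
    Subgroup.mem_center_iff.mp (zpow_mem gen_sigma_mem_center p') u
  have hσt (u : PresentedGroup (rels11 g)) : Commute u (gen .sigmat ^ q') :=
    Subgroup.mem_center_iff.mp (zpow_mem gen_sigmat_mem_center q') u
  simp only [central, zpow_add, mul_assoc, (hσ (gen .sigmat ^ q)).left_comm,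
    (hσ (gen .zeta ^ r)).left_comm, (hσt (gen .zeta ^ r)).left_comm]

abbrev prodA (m mt : Fin g → ℤ) : PresentedGroup (rels11 g) :=
  prodZPow (fun i => gen (.a i)) (fun i => gen (.at_ i)) m mt

abbrev prodB (n nt : Fin g → ℤ) : PresentedGroup (rels11 g) :=
  prodZPow (fun i => gen (.b i)) (fun i => gen (.bt i)) n nt

theorem prodA_add (m mt m' mt' : Fin g → ℤ) :
    prodA (m + m') (mt + mt') = prodA m mt * prodA m' mt' :=
  prodZPow_add (fun _ _ => gen_commute (by simp [Gen11.exceptional]))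
    (fun _ _ => gen_commute (by simp [Gen11.exceptional]))
    (fun _ _ => gen_commute (by simp [Gen11.exceptional])) m mt m' mt'

theorem prodB_add (n nt n' nt' : Fin g → ℤ) :
    prodB (n + n') (nt + nt') = prodB n nt * prodB n' nt' :=
  prodZPow_add (fun _ _ => gen_commute (by simp [Gen11.exceptional]))
    (fun _ _ => gen_commute (by simp [Gen11.exceptional]))
    (fun _ _ => gen_commute (by simp [Gen11.exceptional])) n nt n' nt'

theorem prodA_single_add (j : Fin g) (m mt : Fin g → ℤ) :
    prodA (Pi.single j 1 + m) mt = gen (.a j) * prodA m mt := by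
  simpa [prodZPow_single_zero] using prodA_add (Pi.single j 1) 0 m mt

theorem prodA_add_single (j : Fin g) (m mt : Fin g → ℤ) :
    prodA m (Pi.single j 1 + mt) = gen (.at_ j) * prodA m mt := by
  simpa [prodZPow_zero_single] using prodA_add 0 (Pi.single j 1) m mt

theorem prodB_single_add (j : Fin g) (n nt : Fin g → ℤ) :
    prodB (Pi.single j 1 + n) nt = gen (.b j) * prodB n nt := by
  simpa [prodZPow_single_zero] using prodB_add (Pi.single j 1) 0 n nt

theorem prodB_add_single (j : Fin g) (n nt : Fin g → ℤ) :
    prodB n (Pi.single j 1 + nt) = gen (.bt j) * prodB n nt := by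
  simpa [prodZPow_zero_single] using prodB_add 0 (Pi.single j 1) n nt

theorem gen_b_conj_prodA (j : Fin g) (m mt : Fin g → ℤ) :
    gen (.b j) * prodA m mt * (gen (.b j))⁻¹ = central (-2 * m j) 0 (-mt j) * prodA m mt := by
  rw [conj_prodZPow j (inv_mem (pow_mem gen_sigma_mem_center 2)) (inv_mem gen_zeta_mem_center)
    (gen_b_conj_a j) (gen_b_conj_at j)
    (fun i hij => gen_commute (by simp [Gen11.exceptional, hij]))
    (fun i hij => gen_commute (by simp [Gen11.exceptional, hij]))]
  simp only [central]
  group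

theorem gen_bt_conj_prodA (j : Fin g) (m mt : Fin g → ℤ) :
    gen (.bt j) * prodA m mt * (gen (.bt j))⁻¹ = central 0 (-2 * mt j) (-m j) * prodA m mt := by
  rw [conj_prodZPow j (inv_mem gen_zeta_mem_center) (inv_mem (pow_mem gen_sigmat_mem_center 2))
    (gen_bt_conj_a j) (gen_bt_conj_at j)
    (fun i hij => gen_commute (by simp [Gen11.exceptional, hij]))
    (fun i hij => gen_commute (by simp [Gen11.exceptional, hij]))]
  simp only [central]
  group
  rw [← Subgroup.mem_center_iff.mp (zpow_mem gen_zeta_mem_center (-m j)) (gen .sigmat ^ _)]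

def normalForm (e : Model g) : PresentedGroup (rels11 g) :=
  central e.p e.q e.r * prodA e.m e.mt * prodB e.n e.nt

theorem normalForm_one : normalForm (1 : Model g) = 1 := by
  simp [normalForm, central, prodZPow_zero]

theorem normalForm_ofZ_mul (p q r : ℤ) (e : Model g) :
    normalForm (ofZ (.ofAdd (p, q, r)) * e) = central p q r * normalForm e := by
  have he : ofZ (.ofAdd (p, q, r)) * e = ⟨p + e.p, q + e.q, r + e.r, e.m, e.mt, e.n, e.nt⟩ := by
    ext <;> simp
  rw [he, normalForm, normalForm, ← central_mul_central]
  simp only [mul_assoc]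

theorem mul_normalForm_of_mul_prodA {c : PresentedGroup (rels11 g)} {m mt m' mt' : Fin g → ℤ}
    (hc : c * prodA m mt = prodA m' mt') (p q r : ℤ) (n nt : Fin g → ℤ) :
    c * normalForm ⟨p, q, r, m, mt, n, nt⟩ = normalForm ⟨p, q, r, m', mt', n, nt⟩ := by
  simp only [normalForm, mul_assoc, (commute_central c p q r).left_comm, ← hc]

theorem mul_normalForm_of_conj_prodA {c : PresentedGroup (rels11 g)} {m mt : Fin g → ℤ}
    {p' q' r' : ℤ}
    (hc : c * prodA m mt * c⁻¹ = central p' q' r' * prodA m mt) (p q r : ℤ) (n nt : Fin g → ℤ) :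
    c * normalForm ⟨p, q, r, m, mt, n, nt⟩ =
      central (p + p') (q + q') (r + r') * prodA m mt * (c * prodB n nt) := by
  rw [mul_inv_eq_iff_eq_mul] at hc
  simp only [normalForm, ← central_mul_central, mul_assoc, (commute_central c p q r).left_comm]
  rw [← mul_assoc c, hc]
  simp only [mul_assoc]

theorem normalForm_genImage_mul (x : Gen11 g) (e : Model g) :
    normalForm (genImage x * e) = gen x * normalForm e := by
  cases x with
  | sigma => exact (normalForm_ofZ_mul 1 0 0 e).trans (by simp [central])
  | sigmat => exact (normalForm_ofZ_mul 0 1 0 e).trans (by simp [central])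
  | zeta => exact (normalForm_ofZ_mul 0 0 1 e).trans (by simp [central])
  | a j =>
    have he : genImage (.a j) * e = ⟨e.p, e.q, e.r, Pi.single j 1 + e.m, e.mt, e.n, e.nt⟩ := by
      ext <;> simp [genImage]
    rw [he, ← mul_normalForm_of_mul_prodA (prodA_single_add j e.m e.mt).symm]
  | at_ j =>
    have he : genImage (.at_ j) * e = ⟨e.p, e.q, e.r, e.m, Pi.single j 1 + e.mt, e.n, e.nt⟩ := by
      ext <;> simp [genImage]
    rw [he, ← mul_normalForm_of_mul_prodA (prodA_add_single j e.m e.mt).symm]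
  | b j =>
    have he : genImage (.b j) * e =
        ⟨e.p + -2 * e.m j, e.q + 0, e.r + -e.mt j, e.m, e.mt, Pi.single j 1 + e.n, e.nt⟩ := by
      ext <;> simp [genImage] <;> ring
    rw [he, mul_normalForm_of_conj_prodA (gen_b_conj_prodA j e.m e.mt), normalForm,
      prodB_single_add, mul_assoc]
  | bt j =>
    have he : genImage (.bt j) * e =
        ⟨e.p + 0, e.q + -2 * e.mt j, e.r + -e.m j, e.m, e.mt, e.n, Pi.single j 1 + e.nt⟩ := by
      ext <;> simp [genImage] <;> ring
    rw [he, mul_normalForm_of_conj_prodA (gen_bt_conj_prodA j e.m e.mt), normalForm,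
      prodB_add_single, mul_assoc]

theorem normalForm_toModel_mul (x : PresentedGroup (rels11 g)) (e : Model g) :
    normalForm (toModel x * e) = x * normalForm e := by
  let S : Subgroup (PresentedGroup (rels11 g)) :=
    { carrier := {x | ∀ e, normalForm (toModel x * e) = x * normalForm e}
      mul_mem' := fun {y z} hy hz e => by rw [map_mul, mul_assoc, hy, hz, mul_assoc]
      one_mem' := fun e => by simp
      inv_mem' := fun {y} hy e => by
        rw [map_inv, eq_inv_mul_iff_mul_eq, ← hy, mul_inv_cancel_left] }
  exact PresentedGroup.generated_by _ S (fun x e => by simpa using normalForm_genImage_mul x e) x e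

theorem normalForm_toModel (x : PresentedGroup (rels11 g)) : normalForm (toModel x) = x := by
  simpa [normalForm_one] using normalForm_toModel_mul x 1

theorem toModel_central (p q r : ℤ) :
    toModel (central (g := g) p q r) = ofZ (.ofAdd (p, q, r)) := by
  simp only [central, map_mul, map_zpow, toModel_of, genImage]
  rw [← map_zpow ofZ, ← map_zpow ofZ, ← map_zpow ofZ, ← map_mul, ← map_mul]
  congr 1
  simp [← ofAdd_zsmul, ← ofAdd_add]

theorem toModel_prodA (m mt : Fin g → ℤ) : toModel (prodA m mt) = ofA (.ofAdd (m, mt)) := by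
  simp only [map_prodZPow, gen, toModel_of]
  exact prodZPow_ofAdd_single ofA m mt

theorem toModel_prodB (n nt : Fin g → ℤ) : toModel (prodB n nt) = ofB (.ofAdd (n, nt)) := by
  simp only [map_prodZPow, gen, toModel_of]
  exact prodZPow_ofAdd_single ofB n nt

theorem toModel_normalForm (e : Model g) : toModel (normalForm e) = e := by
  rw [normalForm, map_mul, map_mul, toModel_central, toModel_prodA, toModel_prodB,
    ofZ_mul_ofA_mul_ofB]

end Rels11

theorem stmt_11_general (g : ℕ) (x : PresentedGroup (rels11 g)) :
    ∃! e : (ℤ × ℤ × ℤ) × (Fin g → ℤ) × (Fin g → ℤ) × (Fin g → ℤ) × (Fin g → ℤ),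
      x = (PresentedGroup.of (rels := rels11 g) Gen11.sigma) ^ e.1.1 *
          (PresentedGroup.of (rels := rels11 g) Gen11.sigmat) ^ e.1.2.1 *
          (PresentedGroup.of (rels := rels11 g) Gen11.zeta) ^ e.1.2.2 *
          ((List.finRange g).map
            (fun i => (PresentedGroup.of (rels := rels11 g) (Gen11.a i)) ^ e.2.1 i *
              (PresentedGroup.of (rels := rels11 g) (Gen11.at_ i)) ^ e.2.2.1 i)).prod *
          ((List.finRange g).map
            (fun i => (PresentedGroup.of (rels := rels11 g) (Gen11.b i)) ^ e.2.2.2.1 i *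
              (PresentedGroup.of (rels := rels11 g) (Gen11.bt i)) ^ e.2.2.2.2 i)).prod := by
  open Rels11 in
  refine ⟨(((toModel x).p, (toModel x).q, (toModel x).r), (toModel x).m, (toModel x).mt,
    (toModel x).n, (toModel x).nt), (normalForm_toModel x).symm, ?_⟩
  rintro ⟨⟨p, q, r⟩, m, mt, n, nt⟩ hx
  have hx' : x = normalForm ⟨p, q, r, m, mt, n, nt⟩ := hx
  rw [hx', toModel_normalForm]

/-- Every element of the presented group `H` has a unique expression
`σ^p σ̃^q ζ^r ∏ᵢ aᵢ^{mᵢ} ãᵢ^{m̃ᵢ} ∏ᵢ bᵢ^{nᵢ} b̃ᵢ^{ñᵢ}`. -/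
theorem stmt_11 (g : ℕ) (hg : 1 ≤ g) (x : PresentedGroup (rels11 g)) :
    ∃! e : (ℤ × ℤ × ℤ) × (Fin g → ℤ) × (Fin g → ℤ) × (Fin g → ℤ) × (Fin g → ℤ),
      x = (PresentedGroup.of (rels := rels11 g) Gen11.sigma) ^ e.1.1 *
          (PresentedGroup.of (rels := rels11 g) Gen11.sigmat) ^ e.1.2.1 *
          (PresentedGroup.of (rels := rels11 g) Gen11.zeta) ^ e.1.2.2 *
          ((List.finRange g).map
            (fun i => (PresentedGroup.of (rels := rels11 g) (Gen11.a i)) ^ e.2.1 i *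
              (PresentedGroup.of (rels := rels11 g) (Gen11.at_ i)) ^ e.2.2.1 i)).prod *
          ((List.finRange g).map
            (fun i => (PresentedGroup.of (rels := rels11 g) (Gen11.b i)) ^ e.2.2.2.1 i *
              (PresentedGroup.of (rels := rels11 g) (Gen11.bt i)) ^ e.2.2.2.2 i)).prod :=
  stmt_11_general g x
end
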